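/- Let z₀ be a relative equilibrium with angular velocity ω and stability matrix B = K(M⁻¹D²H(z₀) + ω·Id). Suppose v = v₁ + i v₂ (with v₁, v₂ ∈ ℝ^{2n}, not both zero) is a complex eigenvector of M⁻¹D²H(z₀) with eigenvalue μ = α + iβ. Then Bv₁ = (α + ω)Kv₁ − βKv₂, Bv₂ = βKv₁ + (α + ω)Kv₂, B(Kv₁) = (α − ω)v₁ − βv₂, and B(Kv₂) = βv₁ + (α − ω)v₂; consequently span{v₁, v₂, Kv₁, Kv₂} is a real invariant subspace of B, and if this subspace is four-dimensional then the real quartic (λ² + ω² − μ²)(λ² + ω² − μ̄²) divides the characteristic polynomial of B. -/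

import Mathlib

noncomputable section

open Finset Polynomial

abbrev Idx (n : ℕ) := Fin n × Fin 2

/-- The Hamiltonian of the planar `n`-vortex problem. -/
def vortexH (n : ℕ) (Γ : Fin n → ℝ) (z : Idx n → ℝ) : ℝ :=
  -∑ i : Fin n, ∑ j ∈ Finset.Ioi i, Γ i * Γ j *
    Real.log (Real.sqrt ((z (i, 0) - z (j, 0)) ^ 2 + (z (i, 1) - z (j, 1)) ^ 2))

/-- The total vortex angular momentum `L = ∑_{i<j} Γᵢ Γⱼ`. -/
def vortexL (n : ℕ) (Γ : Fin n → ℝ) : ℝ :=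
  ∑ i : Fin n, ∑ j ∈ Finset.Ioi i, Γ i * Γ j

/-- The gradient of the Hamiltonian (vector of partial derivatives). -/
def gradH (n : ℕ) (Γ : Fin n → ℝ) (z : Idx n → ℝ) : Idx n → ℝ := fun a =>
  fderiv ℝ (vortexH n Γ) z (Pi.single a 1)

/-- The Hessian matrix `D²H(z)` of second partial derivatives. -/
def D2H (n : ℕ) (Γ : Fin n → ℝ) (z : Idx n → ℝ) : Matrix (Idx n) (Idx n) ℝ :=
  Matrix.of fun a b =>
    fderiv ℝ (fun w => fderiv ℝ (vortexH n Γ) w (Pi.single b 1)) z (Pi.single a 1)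

/-- The block-diagonal rotation matrix `K` with `n` copies of `J = [[0,1],[-1,0]]`. -/
def Kmat (n : ℕ) : Matrix (Idx n) (Idx n) ℝ :=
  Matrix.of fun a b => if a.1 = b.1 then !![0, 1; -1, 0] a.2 b.2 else 0

/-- The diagonal matrix `M = diag(Γ₁,Γ₁,…,Γₙ,Γₙ)` of circulations. -/
def Mmat (n : ℕ) (Γ : Fin n → ℝ) : Matrix (Idx n) (Idx n) ℝ :=
  Matrix.diagonal fun a => Γ a.1

/-- The vortex positions are pairwise distinct. -/
def Distinct (n : ℕ) (z : Idx n → ℝ) : Prop :=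
  ∀ i j : Fin n, i ≠ j → (z (i, 0), z (i, 1)) ≠ (z (j, 0), z (j, 1))

/-- The angular impulse `I(z) = (1/2) ∑ᵢ Γᵢ ‖zᵢ‖²`. -/
def angImpulse (n : ℕ) (Γ : Fin n → ℝ) (z : Idx n → ℝ) : ℝ :=
  (1 / 2) * ∑ i : Fin n, Γ i * ((z (i, 0)) ^ 2 + (z (i, 1)) ^ 2)

/-- `z₀` is a relative equilibrium with angular velocity `ω ≠ 0`:
`∇H(z₀) + ω M z₀ = 0`. -/
def IsRelEq (n : ℕ) (Γ : Fin n → ℝ) (z₀ : Idx n → ℝ) (ω : ℝ) : Prop :=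
  Distinct n z₀ ∧ ω ≠ 0 ∧ gradH n Γ z₀ + ω • (Mmat n Γ).mulVec z₀ = 0

/-- The stability matrix `B = K (M⁻¹ D²H(z₀) + ω Id)`. -/
def Bmat (n : ℕ) (Γ : Fin n → ℝ) (z₀ : Idx n → ℝ) (ω : ℝ) : Matrix (Idx n) (Idx n) ℝ :=
  Kmat n * ((Mmat n Γ)⁻¹ * D2H n Γ z₀ + ω • (1 : Matrix (Idx n) (Idx n) ℝ))

/-- The multiset of (complex) eigenvalues of the stability matrix `B`, with multiplicity. -/
def specB (n : ℕ) (Γ : Fin n → ℝ) (z₀ : Idx n → ℝ) (ω : ℝ) : Multiset ℂ :=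
  (((Bmat n Γ z₀ ω).map Complex.ofReal).charpoly).roots

/-- The trivial eigenvalues `0, 0, ωi, -ωi` of the stability matrix. -/
def trivialEvs (ω : ℝ) : Multiset ℂ := {0, 0, (ω : ℂ) * Complex.I, -((ω : ℂ) * Complex.I)}

/-- `V = span{z₀, Kz₀}`. -/
def Vspan (n : ℕ) (z₀ : Idx n → ℝ) : Submodule ℝ (Idx n → ℝ) :=
  Submodule.span ℝ {z₀, (Kmat n).mulVec z₀}

/-- The `M`-orthogonal complement `V^⊥` of `V = span{z₀, Kz₀}` (over ℝ). -/
def VperpR (n : ℕ) (Γ : Fin n → ℝ) (z₀ : Idx n → ℝ) : Submodule ℝ (Idx n → ℝ) :=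
  LinearMap.ker (Matrix.mulVecLin (Matrix.of
    ![(Mmat n Γ).mulVec z₀, (Mmat n Γ).mulVec ((Kmat n).mulVec z₀)]))

/-- The complexification of `V^⊥`. -/
def VperpC (n : ℕ) (Γ : Fin n → ℝ) (z₀ : Idx n → ℝ) : Submodule ℂ (Idx n → ℂ) :=
  LinearMap.ker (Matrix.mulVecLin (Matrix.of
    ![fun a => ((Mmat n Γ).mulVec z₀ a : ℂ),
      fun a => ((Mmat n Γ).mulVec ((Kmat n).mulVec z₀) a : ℂ)]))

/-- The complexified stability matrix as a linear map on `ℂ^{2n}`. -/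
def BC (n : ℕ) (Γ : Fin n → ℝ) (z₀ : Idx n → ℝ) (ω : ℝ) : (Idx n → ℂ) →ₗ[ℂ] (Idx n → ℂ) :=
  Matrix.mulVecLin ((Bmat n Γ z₀ ω).map Complex.ofReal)

/-- `z₀` is linearly stable: the `2n - 4` nontrivial eigenvalues of `B` are nonzero and purely
imaginary, and the restriction of `B` to `V^⊥` is diagonalizable over `ℂ`. -/
def IsLinearlyStable (n : ℕ) (Γ : Fin n → ℝ) (z₀ : Idx n → ℝ) (ω : ℝ) : Prop :=
  (∃ ν : Multiset ℂ, specB n Γ z₀ ω = trivialEvs ω + ν ∧ ∀ μ ∈ ν, μ ≠ 0 ∧ μ.re = 0) ∧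
  ∃ h : ∀ w ∈ VperpC n Γ z₀, BC n Γ z₀ ω w ∈ VperpC n Γ z₀,
    (⨆ μ : ℂ, Module.End.eigenspace ((BC n Γ z₀ ω).restrict h) μ) = ⊤

/-- `z₀` is spectrally stable: nontrivial eigenvalues are nonzero and purely imaginary. -/
def IsSpectrallyStable (n : ℕ) (Γ : Fin n → ℝ) (z₀ : Idx n → ℝ) (ω : ℝ) : Prop :=
  ∃ ν : Multiset ℂ, specB n Γ z₀ ω = trivialEvs ω + ν ∧ ∀ μ ∈ ν, μ ≠ 0 ∧ μ.re = 0

/-- `z₀` is degenerate: some nontrivial eigenvalue of `B` is zero. -/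
def IsDegenerate (n : ℕ) (Γ : Fin n → ℝ) (z₀ : Idx n → ℝ) (ω : ℝ) : Prop :=
  ∃ ν : Multiset ℂ, specB n Γ z₀ ω = trivialEvs ω + ν ∧ 0 ∈ ν

/-- `z₀` is unstable: some nontrivial eigenvalue of `B` has nonzero real part. -/
def IsUnstable (n : ℕ) (Γ : Fin n → ℝ) (z₀ : Idx n → ℝ) (ω : ℝ) : Prop :=
  ∃ ν : Multiset ℂ, specB n Γ z₀ ω = trivialEvs ω + ν ∧ ∃ μ ∈ ν, μ.re ≠ 0

/-- Rotation `e^{Jθ}` applied to each vortex of the configuration `z`. -/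
def rotConf (n : ℕ) (θ : ℝ) (z : Idx n → ℝ) : Idx n → ℝ := fun a =>
  if a.2 = 0 then Real.cos θ * z (a.1, 0) + Real.sin θ * z (a.1, 1)
  else -Real.sin θ * z (a.1, 0) + Real.cos θ * z (a.1, 1)

/-- The Euclidean norm on `ℝ^{2n}`. -/
def enorm2 (n : ℕ) (v : Idx n → ℝ) : ℝ := Real.sqrt (∑ a : Idx n, (v a) ^ 2)

/-!
At a configuration with distinct positions, `D²H` is a sum over pairs of vortices of Hessians of
the harmonic function `log ‖x‖` on `ℝ²`. Each `2 × 2` block is therefore symmetric and trace-free,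
i.e. of the form `[[a, b], [b, -a]]`, and such blocks anticommute with `J`. Hence `K` anticommutes
with `D²H`, and, as `K` commutes with the block-scalar `M`, also with `A = M⁻¹ D²H`. Splitting
`A v = μ v` into real and imaginary parts and using `K² = -1` gives the four formulas for `B`, and
in the basis `(v₁, v₂, K v₁, K v₂)` the restriction of `B` has a `4 × 4` matrix whose
characteristic polynomial is the quartic.
-/

theorem Commute.ringInverse_right {M₀ : Type*} [MonoidWithZero M₀] {a b : M₀} (h : Commute a b) :
    Commute a (Ring.inverse b) := by
  by_cases hb : IsUnit b
  · obtain ⟨u, rfl⟩ := hb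
    rw [Ring.inverse_unit]
    exact h.units_inv_right
  · rw [Ring.inverse_non_unit _ hb]
    exact Commute.zero_right a

theorem Commute.nonsing_inv_right {m R : Type*} [Fintype m] [DecidableEq m] [CommRing R]
    {A B : Matrix m m R} (h : Commute A B) : Commute A B⁻¹ := by
  rw [Matrix.nonsing_inv_eq_ringInverse]
  exact h.ringInverse_right

open Matrix in
theorem Matrix.mulVec_re_im_of_map_ofReal_mulVec_eq {m : Type*} [Fintype m] {A : Matrix m m ℝ}
    {v₁ v₂ : m → ℝ} {α β : ℝ}
    (heig : (A.map Complex.ofReal).mulVec (fun a => (v₁ a : ℂ) + (v₂ a : ℂ) * Complex.I)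
      = ((α : ℂ) + (β : ℂ) * Complex.I) • (fun a => (v₁ a : ℂ) + (v₂ a : ℂ) * Complex.I)) :
    A *ᵥ v₁ = α • v₁ - β • v₂ ∧ A *ᵥ v₂ = β • v₁ + α • v₂ := by
  have hsplit : ∀ a, (A.map Complex.ofReal).mulVec (fun a => (v₁ a : ℂ) + (v₂ a : ℂ) * Complex.I) a
      = ((A *ᵥ v₁) a : ℂ) + ((A *ᵥ v₂) a : ℂ) * Complex.I := by
    intro a
    simp only [Matrix.mulVec, dotProduct, Matrix.map_apply]
    push_cast
    rw [Finset.sum_mul, ← Finset.sum_add_distrib]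
    exact Finset.sum_congr rfl fun b _ => by ring
  constructor <;> funext a <;> have h := congrFun heig a <;> rw [hsplit] at h
  · simpa using congrArg Complex.re h
  · simpa [add_comm] using congrArg Complex.im h

section Anticommuting

open Matrix

variable {m R : Type*} [Fintype m] [DecidableEq m] [CommRing R] {K A : Matrix m m R}

theorem mul_add_smul_one_mul_of_anticomm (hKA : K * A = -(A * K)) (hKK : K * K = -1) (ω : R) :
    K * (A + ω • 1) * K = A - ω • 1 := by
  rw [mul_add, add_mul, hKA, neg_mul, mul_assoc, hKK, Matrix.mul_smul, mul_one, Matrix.smul_mul,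
    hKK]
  simp [sub_eq_add_neg]

theorem mulVec_of_anticomm_of_eigen (hKA : K * A = -(A * K)) (hKK : K * K = -1)
    {v₁ v₂ : m → R} {α β : R} (h₁ : A *ᵥ v₁ = α • v₁ - β • v₂) (h₂ : A *ᵥ v₂ = β • v₁ + α • v₂)
    {ω : R} {B : Matrix m m R} (hB : B = K * (A + ω • 1)) :
    B *ᵥ v₁ = (α + ω) • K *ᵥ v₁ - β • K *ᵥ v₂ ∧
    B *ᵥ v₂ = β • K *ᵥ v₁ + (α + ω) • K *ᵥ v₂ ∧
    B *ᵥ (K *ᵥ v₁) = (α - ω) • v₁ - β • v₂ ∧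
    B *ᵥ (K *ᵥ v₂) = β • v₁ + (α - ω) • v₂ := by
  subst hB
  have hB : ∀ v, (K * (A + ω • 1)) *ᵥ v = K *ᵥ (A *ᵥ v + ω • v) := fun v => by
    rw [← Matrix.mulVec_mulVec, Matrix.add_mulVec, Matrix.smul_mulVec, Matrix.one_mulVec]
  have hBK : ∀ v, (K * (A + ω • 1)) *ᵥ (K *ᵥ v) = A *ᵥ v - ω • v := fun v => by
    rw [Matrix.mulVec_mulVec, mul_add_smul_one_mul_of_anticomm hKA hKK, Matrix.sub_mulVec,
      Matrix.smul_mulVec, Matrix.one_mulVec]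
  refine ⟨?_, ?_, ?_, ?_⟩
  · rw [hB, h₁, ← Matrix.mulVec_smul, ← Matrix.mulVec_smul, ← Matrix.mulVec_sub]; congr 1; module
  · rw [hB, h₂, ← Matrix.mulVec_smul, ← Matrix.mulVec_smul, ← Matrix.mulVec_add]; congr 1; module
  · rw [hBK, h₁]; module
  · rw [hBK, h₂]; module

end Anticommuting

theorem LinearMap.charpoly_restrict_dvd {K V : Type*} [Field K] [AddCommGroup V] [Module K V]
    [FiniteDimensional K V] (f : V →ₗ[K] V) (p : Submodule K V) (h : ∀ x ∈ p, f x ∈ p) :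
    (f.restrict h).charpoly ∣ f.charpoly := by
  obtain ⟨q, hq⟩ := Submodule.exists_isCompl p
  set bp := Module.finBasis K p
  let e := Submodule.prodEquivOfIsCompl p q hq
  let b := ((bp.prod (Module.finBasis K q)).map e)
  have hb : ∀ j, b (Sum.inl j) = (bp j : V) := fun j => by
    simp [b, Module.Basis.prod_apply, e, Submodule.coe_prodEquivOfIsCompl']
  have hrepr : ∀ (y : p) (i), b.repr (y : V) i = Sum.elim (bp.repr y) 0 i := by
    intro y i
    have : (y : V) = e (y, 0) := by simp [e, Submodule.coe_prodEquivOfIsCompl']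
    rw [this]
    rcases i with i | i <;> simp [b, Module.Basis.map_repr]
  rw [← LinearMap.charpoly_toMatrix f b, ← LinearMap.charpoly_toMatrix (f.restrict h) bp]
  set M := LinearMap.toMatrix b b f
  have h₁₁ : M.toBlocks₁₁ = LinearMap.toMatrix bp bp (f.restrict h) := by
    ext i j
    simp only [M, Matrix.toBlocks₁₁, LinearMap.toMatrix_apply, Matrix.of_apply, hb]
    exact hrepr ⟨_, h _ (bp j).2⟩ (Sum.inl i)
  have h₂₁ : M.toBlocks₂₁ = 0 := by
    ext i j
    simp only [M, Matrix.toBlocks₂₁, LinearMap.toMatrix_apply, Matrix.of_apply, hb]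
    exact hrepr ⟨_, h _ (bp j).2⟩ (Sum.inr i)
  rw [← Matrix.fromBlocks_toBlocks M, h₂₁, Matrix.charpoly_fromBlocks_zero₂₁, h₁₁]
  exact dvd_mul_right _ _

section SpanOfFamily

variable {K V ι : Type*} [Field K] [AddCommGroup V] [Module K V] [Fintype ι]
  {f : V →ₗ[K] V} {W : ι → V} {R : Matrix ι ι K}

theorem LinearMap.mapsTo_span_range_of_apply_eq_sum (hf : ∀ j, f (W j) = ∑ i, R i j • W i) :
    ∀ x ∈ Submodule.span K (Set.range W), f x ∈ Submodule.span K (Set.range W) := by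
  have : (Submodule.span K (Set.range W)).map f ≤ Submodule.span K (Set.range W) := by
    rw [Submodule.map_span_le]
    rintro _ ⟨j, rfl⟩
    rw [hf j]
    exact Submodule.sum_mem _ fun i _ => Submodule.smul_mem _ _ (Submodule.subset_span ⟨i, rfl⟩)
  exact fun x hx => this (Submodule.mem_map_of_mem hx)

theorem LinearMap.charpoly_dvd_of_apply_eq_sum [FiniteDimensional K V] [DecidableEq ι]
    (hW : LinearIndependent K W) (hf : ∀ j, f (W j) = ∑ i, R i j • W i) :
    R.charpoly ∣ f.charpoly := by
  have hR : LinearMap.toMatrix (Module.Basis.span hW) (Module.Basis.span hW)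
      (f.restrict (LinearMap.mapsTo_span_range_of_apply_eq_sum hf)) = R := by
    ext i j
    rw [LinearMap.toMatrix_apply]
    have : f.restrict (LinearMap.mapsTo_span_range_of_apply_eq_sum hf) (Module.Basis.span hW j)
        = ∑ k, R k j • Module.Basis.span hW k := by
      apply Subtype.coe_injective
      simpa [Module.Basis.span_apply] using hf j
    simp only [this, map_sum, map_smul, Module.Basis.repr_self, Finsupp.coe_finsetSum,
      Finsupp.coe_smul, Finset.sum_apply, Pi.smul_apply, Finsupp.single_apply, smul_eq_mul,
      mul_ite, mul_one, mul_zero, Finset.sum_ite_eq', Finset.mem_univ, if_true]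
  rw [← hR, LinearMap.charpoly_toMatrix]
  exact LinearMap.charpoly_restrict_dvd f _ _

end SpanOfFamily

/-- The matrix of `B` in the basis `(v₁, v₂, K v₁, K v₂)`. -/
def Matrix.stabilityBlock {R : Type*} [CommRing R] (α β ω : R) : Matrix (Fin 4) (Fin 4) R :=
  !![0, 0, α - ω, β; 0, 0, -β, α - ω; α + ω, β, 0, 0; -β, α + ω, 0, 0]

theorem Matrix.charpoly_stabilityBlock {R : Type*} [CommRing R] (α β ω : R) :
    (stabilityBlock α β ω).charpoly
      = (X ^ 2 + C (ω ^ 2)) ^ 2 - C (2 * (α ^ 2 - β ^ 2)) * (X ^ 2 + C (ω ^ 2))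
          + C ((α ^ 2 + β ^ 2) ^ 2) := by
  have hc : charmatrix (stabilityBlock α β ω)
      = !![X, 0, -C (α - ω), -C β; 0, X, C β, -C (α - ω);
           -C (α + ω), -C β, X, 0; C β, -C (α + ω), 0, X] := by
    ext i j : 2
    fin_cases i <;> fin_cases j <;>
      first
        | (rw [charmatrix_apply_eq]; simp [stabilityBlock])
        | (rw [charmatrix_apply_ne _ _ _ (by decide)]; simp [stabilityBlock])
  rw [charpoly, hc]
  simp [det_succ_row_zero, Fin.sum_univ_succ,
    show Fin.succAbove (2 : Fin 4) (2 : Fin 3) = 3 from rfl,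
    show Fin.succAbove (3 : Fin 4) (2 : Fin 3) = 2 from rfl]
  push_cast [map_sub, map_add, map_mul, map_pow, map_ofNat]
  ring

section Rotation

variable {n : ℕ}

lemma Kmat_mul_apply (D : Matrix (Idx n) (Idx n) ℝ) (k : Fin n) (s : Fin 2) (b : Idx n) :
    (Kmat n * D) (k, s) b = if s = 0 then D (k, 1) b else -D (k, 0) b := by
  rw [Matrix.mul_apply, Fintype.sum_prod_type, Finset.sum_eq_single k]
  · fin_cases s <;> simp [Kmat, Fin.sum_univ_two]
  · intro c _ hc
    simp [Kmat, Ne.symm hc]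
  · simp

lemma mul_Kmat_apply (D : Matrix (Idx n) (Idx n) ℝ) (a : Idx n) (l : Fin n) (t : Fin 2) :
    (D * Kmat n) a (l, t) = if t = 0 then -D a (l, 1) else D a (l, 0) := by
  rw [Matrix.mul_apply, Fintype.sum_prod_type, Finset.sum_eq_single l]
  · fin_cases t <;> simp [Kmat, Fin.sum_univ_two]
  · intro c _ hc
    simp [Kmat, hc]
  · simp

lemma Kmat_mul_Kmat : Kmat n * Kmat n = -1 := by
  ext ⟨k, s⟩ ⟨l, t⟩
  rw [Kmat_mul_apply]
  by_cases h : k = l <;> fin_cases s <;> fin_cases t <;> simp [Kmat, h]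

lemma Kmat_mul_eq_neg_mul_Kmat {D : Matrix (Idx n) (Idx n) ℝ}
    (h₁₀ : ∀ k l, D (k, 1) (l, 0) = D (k, 0) (l, 1))
    (h₁₁ : ∀ k l, D (k, 1) (l, 1) = -D (k, 0) (l, 0)) :
    Kmat n * D = -(D * Kmat n) := by
  ext ⟨k, s⟩ ⟨l, t⟩
  rw [Kmat_mul_apply, Matrix.neg_apply, mul_Kmat_apply]
  fin_cases s <;> fin_cases t <;> simp [h₁₀, h₁₁]

lemma commute_Kmat_Mmat (Γ : Fin n → ℝ) : Commute (Kmat n) (Mmat n Γ) := by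
  ext ⟨k, s⟩ ⟨l, t⟩
  rw [Mmat, Matrix.mul_diagonal, Matrix.diagonal_mul]
  by_cases h : k = l
  · subst h; simp [mul_comm]
  · simp [Kmat, h]

end Rotation

namespace Vortex

open Filter Topology

section Planar

def sqNorm (x : Fin 2 → ℝ) : ℝ := x 0 ^ 2 + x 1 ^ 2

def logRadius (x : Fin 2 → ℝ) : ℝ := Real.log (Real.sqrt (sqNorm x))

def gradLogRadius (t : Fin 2) (x : Fin 2 → ℝ) : ℝ := x t / sqNorm x

def hessLogRadius (s t : Fin 2) (x : Fin 2 → ℝ) : ℝ :=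
  ((if s = t then sqNorm x else 0) - 2 * x s * x t) / sqNorm x ^ 2

def coord (t : Fin 2) : (Fin 2 → ℝ) →L[ℝ] ℝ := ContinuousLinearMap.proj t

@[simp] lemma coord_apply (t : Fin 2) (v : Fin 2 → ℝ) : coord t v = v t := rfl

lemma sum_mul_coord_single (g : Fin 2 → ℝ) (s : Fin 2) :
    ∑ t, g t * coord t (Pi.single s 1) = g s := by
  simp [Pi.single_apply]

lemma sqNorm_ne_zero {x : Fin 2 → ℝ} (hx : x ≠ 0) : sqNorm x ≠ 0 := by
  contrapose! hx
  obtain ⟨h0, h1⟩ := (add_eq_zero_iff_of_nonneg (sq_nonneg _) (sq_nonneg _)).1 hx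
  ext t
  fin_cases t
  · simpa using pow_eq_zero_iff two_ne_zero |>.1 h0
  · simpa using pow_eq_zero_iff two_ne_zero |>.1 h1

lemma hasFDerivAt_sqNorm (x : Fin 2 → ℝ) :
    HasFDerivAt sqNorm (∑ t, (2 * x t) • coord t) x := by
  refine (((coord 0).hasFDerivAt.pow 2).add ((coord 1).hasFDerivAt.pow 2)).congr_fderiv ?_
  ext v
  simp [Fin.sum_univ_two]

lemma hasFDerivAt_logRadius {x : Fin 2 → ℝ} (hx : x ≠ 0) :
    HasFDerivAt logRadius (∑ t, gradLogRadius t x • coord t) x := by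
  have hlog : logRadius = fun y => 2⁻¹ * Real.log (sqNorm y) := by
    funext y
    rw [logRadius, Real.log_sqrt (by unfold sqNorm; positivity), div_eq_inv_mul]
  rw [hlog]
  refine (((hasFDerivAt_sqNorm x).log (sqNorm_ne_zero hx)).const_mul 2⁻¹).congr_fderiv ?_
  ext v
  simp [gradLogRadius, Fin.sum_univ_two]
  field_simp

lemma hasFDerivAt_gradLogRadius (t : Fin 2) {x : Fin 2 → ℝ} (hx : x ≠ 0) :
    HasFDerivAt (gradLogRadius t) (∑ s, hessLogRadius s t x • coord s) x := by
  have hx' := sqNorm_ne_zero hx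
  have hinv := (hasDerivAt_inv hx').comp_hasFDerivAt x (hasFDerivAt_sqNorm x)
  refine ((coord t).hasFDerivAt.mul hinv).congr_fderiv ?_ |>.congr_of_eventuallyEq
    (.of_forall fun y => div_eq_mul_inv _ _)
  ext v
  fin_cases t <;> simp [hessLogRadius, Fin.sum_univ_two] <;> field_simp <;> ring

lemma hessLogRadius_comm (s t : Fin 2) (x : Fin 2 → ℝ) :
    hessLogRadius s t x = hessLogRadius t s x := by
  fin_cases s <;> fin_cases t <;> simp [hessLogRadius] <;> ring

lemma hessLogRadius_one_one (x : Fin 2 → ℝ) : hessLogRadius 1 1 x = -hessLogRadius 0 0 x := by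
  simp only [hessLogRadius, if_true, sqNorm]; ring

end Planar

section PairSum

variable {n : ℕ}

def relPos (i j : Fin n) : (Idx n → ℝ) →L[ℝ] (Fin 2 → ℝ) :=
  ContinuousLinearMap.pi fun t =>
    (ContinuousLinearMap.proj (i, t) : (Idx n → ℝ) →L[ℝ] ℝ) - ContinuousLinearMap.proj (j, t)

@[simp] lemma relPos_apply (i j : Fin n) (z : Idx n → ℝ) (t : Fin 2) :
    relPos i j z t = z (i, t) - z (j, t) := by
  simp [relPos]

def incidence (i j k : Fin n) : ℝ := (if i = k then 1 else 0) - (if j = k then 1 else 0)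

lemma relPos_single (i j : Fin n) (a : Idx n) :
    relPos i j (Pi.single a 1) = incidence i j a.1 • Pi.single a.2 1 := by
  ext t
  by_cases ht : t = a.2 <;> simp [Pi.single_apply, incidence, Prod.ext_iff, ht, eq_comm]

def pairSum (c : Fin n → Fin n → ℝ) (F : (Fin 2 → ℝ) → ℝ) (z : Idx n → ℝ) : ℝ :=
  ∑ i, ∑ j ∈ Ioi i, c i j * F (relPos i j z)

lemma fderiv_pairSum_single {c : Fin n → Fin n → ℝ} {F : (Fin 2 → ℝ) → ℝ}
    {dF : Fin 2 → (Fin 2 → ℝ) → ℝ} (hF : ∀ x ≠ 0, HasFDerivAt F (∑ t, dF t x • coord t) x)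
    {z : Idx n → ℝ} (hz : ∀ i j, i < j → relPos i j z ≠ 0) (a : Idx n) :
    fderiv ℝ (pairSum c F) z (Pi.single a 1)
      = pairSum (fun i j => c i j * incidence i j a.1) (dF a.2) z := by
  have hsum : HasFDerivAt (pairSum c F) (∑ i, ∑ j ∈ Ioi i,
      c i j • (∑ t, dF t (relPos i j z) • coord t).comp (relPos i j)) z :=
    HasFDerivAt.fun_sum fun i _ => HasFDerivAt.fun_sum fun j hj =>
      ((hF _ (hz i j (mem_Ioi.1 hj))).comp z (relPos i j).hasFDerivAt).const_mul (c i j)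
  simp only [hsum.fderiv, _root_.sum_apply, _root_.smul_apply,
    ContinuousLinearMap.comp_apply, relPos_single, map_smul, sum_mul_coord_single, smul_eq_mul,
    pairSum, mul_assoc]

lemma vortexH_eq_pairSum (Γ : Fin n → ℝ) :
    vortexH n Γ = pairSum (fun i j => -(Γ i * Γ j)) logRadius := by
  funext z
  simp [vortexH, pairSum, logRadius, sqNorm]

lemma eventually_relPos_ne_zero {z : Idx n → ℝ} (hz : ∀ i j, i < j → relPos i j z ≠ 0) :
    ∀ᶠ w in 𝓝 z, ∀ i j, i < j → relPos i j w ≠ 0 :=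
  eventually_all.2 fun i => eventually_all.2 fun j => eventually_imp_distrib_left.2 fun h =>
    (relPos i j).continuous.continuousAt.eventually_ne (hz i j h)

lemma D2H_eq_pairSum (Γ : Fin n → ℝ) {z : Idx n → ℝ} (hz : ∀ i j, i < j → relPos i j z ≠ 0)
    (a b : Idx n) :
    D2H n Γ z a b = pairSum (fun i j => -(Γ i * Γ j) * incidence i j b.1 * incidence i j a.1)
      (hessLogRadius a.2 b.2) z := by
  have hgrad : (fun w => fderiv ℝ (vortexH n Γ) w (Pi.single b 1))
      =ᶠ[𝓝 z] pairSum (fun i j => -(Γ i * Γ j) * incidence i j b.1) (gradLogRadius b.2) := by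
    filter_upwards [eventually_relPos_ne_zero hz] with w hw
    rw [vortexH_eq_pairSum, fderiv_pairSum_single (fun _ => hasFDerivAt_logRadius) hw]
  rw [D2H, Matrix.of_apply, hgrad.fderiv_eq,
    fderiv_pairSum_single (fun _ => hasFDerivAt_gradLogRadius b.2) hz]

end PairSum

variable {n : ℕ}

lemma relPos_ne_zero_of_distinct {z : Idx n → ℝ} (hz : Distinct n z) {i j : Fin n} (hij : i < j) :
    relPos i j z ≠ 0 := by
  intro h
  apply hz i j hij.ne
  have h₀ := congrFun h 0
  have h₁ := congrFun h 1
  simp only [relPos_apply, Pi.zero_apply, sub_eq_zero] at h₀ h₁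
  rw [h₀, h₁]

lemma Kmat_mul_D2H (Γ : Fin n → ℝ) {z : Idx n → ℝ} (hz : ∀ i j, i < j → relPos i j z ≠ 0) :
    Kmat n * D2H n Γ z = -(D2H n Γ z * Kmat n) := by
  refine Kmat_mul_eq_neg_mul_Kmat (fun k l => ?_) (fun k l => ?_) <;>
    simp [D2H_eq_pairSum Γ hz, pairSum, hessLogRadius_comm 1 0, hessLogRadius_one_one]

lemma Kmat_mul_Minv_D2H (Γ : Fin n → ℝ) {z : Idx n → ℝ} (hz : ∀ i j, i < j → relPos i j z ≠ 0) :
    Kmat n * ((Mmat n Γ)⁻¹ * D2H n Γ z) = -((Mmat n Γ)⁻¹ * D2H n Γ z * Kmat n) := by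
  rw [← mul_assoc, (Commute.nonsing_inv_right (commute_Kmat_Mmat Γ)).eq, mul_assoc,
    Kmat_mul_D2H Γ hz, mul_neg, mul_assoc]

end Vortex

theorem complex_eigenvector_invariant_subspace_general (n : ℕ) (Γ : Fin n → ℝ)
    (z₀ : Idx n → ℝ) (ω : ℝ) (hre : IsRelEq n Γ z₀ ω)
    (v₁ v₂ : Idx n → ℝ) (α β : ℝ)
    (heig : (((Mmat n Γ)⁻¹ * D2H n Γ z₀).map Complex.ofReal).mulVec
        (fun a => (v₁ a : ℂ) + (v₂ a : ℂ) * Complex.I)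
      = ((α : ℂ) + (β : ℂ) * Complex.I) •
        (fun a => (v₁ a : ℂ) + (v₂ a : ℂ) * Complex.I)) :
    (Bmat n Γ z₀ ω).mulVec v₁
      = (α + ω) • (Kmat n).mulVec v₁ - β • (Kmat n).mulVec v₂ ∧
    (Bmat n Γ z₀ ω).mulVec v₂
      = β • (Kmat n).mulVec v₁ + (α + ω) • (Kmat n).mulVec v₂ ∧
    (Bmat n Γ z₀ ω).mulVec ((Kmat n).mulVec v₁) = (α - ω) • v₁ - β • v₂ ∧
    (Bmat n Γ z₀ ω).mulVec ((Kmat n).mulVec v₂) = β • v₁ + (α - ω) • v₂ ∧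
    (∀ w ∈ Submodule.span ℝ {v₁, v₂, (Kmat n).mulVec v₁, (Kmat n).mulVec v₂},
      (Bmat n Γ z₀ ω).mulVec w
        ∈ Submodule.span ℝ {v₁, v₂, (Kmat n).mulVec v₁, (Kmat n).mulVec v₂}) ∧
    (Module.finrank ℝ
        (Submodule.span ℝ {v₁, v₂, (Kmat n).mulVec v₁, (Kmat n).mulVec v₂}) = 4 →
      ((X ^ 2 + C (ω ^ 2)) ^ 2 - C (2 * (α ^ 2 - β ^ 2)) * (X ^ 2 + C (ω ^ 2))
          + C ((α ^ 2 + β ^ 2) ^ 2)) ∣ (Bmat n Γ z₀ ω).charpoly) := by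
  have hKA := Vortex.Kmat_mul_Minv_D2H Γ fun i j => Vortex.relPos_ne_zero_of_distinct hre.1
  obtain ⟨hA₁, hA₂⟩ := Matrix.mulVec_re_im_of_map_ofReal_mulVec_eq heig
  obtain ⟨hB₁, hB₂, hB₃, hB₄⟩ :=
    mulVec_of_anticomm_of_eigen hKA Kmat_mul_Kmat hA₁ hA₂ (B := Bmat n Γ z₀ ω) rfl
  set W : Fin 4 → Idx n → ℝ := ![v₁, v₂, (Kmat n).mulVec v₁, (Kmat n).mulVec v₂]
  have hspan :
      ({v₁, v₂, (Kmat n).mulVec v₁, (Kmat n).mulVec v₂} : Set (Idx n → ℝ)) = Set.range W := by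
    simp only [W, Matrix.range_cons, Matrix.range_empty, Set.union_empty, Set.singleton_union]
  have hW : ∀ j, (Bmat n Γ z₀ ω).mulVecLin (W j)
      = ∑ i, Matrix.stabilityBlock α β ω i j • W i := by
    intro j
    fin_cases j <;> simp [W, Matrix.stabilityBlock, Fin.sum_univ_four, hB₁, hB₂, hB₃, hB₄] <;>
      module
  rw [hspan]
  refine ⟨hB₁, hB₂, hB₃, hB₄, LinearMap.mapsTo_span_range_of_apply_eq_sum hW, fun h4 => ?_⟩
  have hli : LinearIndependent ℝ W := by
    rw [linearIndependent_iff_card_eq_finrank_span, Set.finrank, h4, Fintype.card_fin]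
  rw [← Matrix.charpoly_stabilityBlock, ← Matrix.charpoly_mulVecLin (Bmat n Γ z₀ ω)]
  exact LinearMap.charpoly_dvd_of_apply_eq_sum hli hW

/-- a complex eigenvector `v = v₁ + i v₂` of `M⁻¹D²H(z₀)` with eigenvalue
`μ = α + iβ` gives a real invariant subspace `{v₁, v₂, Kv₁, Kv₂}` of the stability matrix `B`,
and (if that subspace is 4-dimensional) the real quartic
`(λ² + ω² - μ²)(λ² + ω² - μ̄²)` divides the characteristic polynomial of `B`. -/
theorem complex_eigenvector_invariant_subspace (n : ℕ) (hn : 2 ≤ n) (Γ : Fin n → ℝ)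
    (hΓ : ∀ i, Γ i ≠ 0) (z₀ : Idx n → ℝ) (ω : ℝ) (hre : IsRelEq n Γ z₀ ω)
    (v₁ v₂ : Idx n → ℝ) (hv : ¬(v₁ = 0 ∧ v₂ = 0)) (α β : ℝ)
    (heig : (((Mmat n Γ)⁻¹ * D2H n Γ z₀).map Complex.ofReal).mulVec
        (fun a => (v₁ a : ℂ) + (v₂ a : ℂ) * Complex.I)
      = ((α : ℂ) + (β : ℂ) * Complex.I) •
        (fun a => (v₁ a : ℂ) + (v₂ a : ℂ) * Complex.I)) :
    (Bmat n Γ z₀ ω).mulVec v₁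
      = (α + ω) • (Kmat n).mulVec v₁ - β • (Kmat n).mulVec v₂ ∧
    (Bmat n Γ z₀ ω).mulVec v₂
      = β • (Kmat n).mulVec v₁ + (α + ω) • (Kmat n).mulVec v₂ ∧
    (Bmat n Γ z₀ ω).mulVec ((Kmat n).mulVec v₁) = (α - ω) • v₁ - β • v₂ ∧
    (Bmat n Γ z₀ ω).mulVec ((Kmat n).mulVec v₂) = β • v₁ + (α - ω) • v₂ ∧
    (∀ w ∈ Submodule.span ℝ {v₁, v₂, (Kmat n).mulVec v₁, (Kmat n).mulVec v₂},
      (Bmat n Γ z₀ ω).mulVec w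
        ∈ Submodule.span ℝ {v₁, v₂, (Kmat n).mulVec v₁, (Kmat n).mulVec v₂}) ∧
    (Module.finrank ℝ
        (Submodule.span ℝ {v₁, v₂, (Kmat n).mulVec v₁, (Kmat n).mulVec v₂}) = 4 →
      ((X ^ 2 + C (ω ^ 2)) ^ 2 - C (2 * (α ^ 2 - β ^ 2)) * (X ^ 2 + C (ω ^ 2))
          + C ((α ^ 2 + β ^ 2) ^ 2)) ∣ (Bmat n Γ z₀ ω).charpoly) :=
  complex_eigenvector_invariant_subspace_general n Γ z₀ ω hre v₁ v₂ α β heig
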